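/- If (H,R) is a quasitriangular bialgebra and B a left H-module algebra, then the coaction ρ(b) = R⁻¹(1⊗b) makes B a left H-comodule algebra, i.e., ρ(ab) = Σ a₍₋₁₎b₍₋₁₎ ⊗ a₍₀₎b₍₀₎ and ρ(1_B) = 1_H ⊗ 1_B. -/
import Mathlib

open TensorProduct

noncomputable section

/-- The coaction `ρ(b) = R⁻¹ (1 ⊗ b) = Σ (R⁻¹)¹ ⊗ (R⁻¹)² · b` induced by the
(inverse of the) R-matrix of a quasitriangular bialgebra. -/
def qtCoaction (k : Type*) {H B : Type*} [Field k] [Semiring H] [Bialgebra k H]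
    [AddCommGroup B] [Module k B] (α : H →ₗ[k] B →ₗ[k] B) (Rinv : H ⊗[k] H) :
    B →ₗ[k] H ⊗[k] B :=
  (TensorProduct.map LinearMap.id (TensorProduct.lift α))
    ∘ₗ (TensorProduct.assoc k H H B).toLinearMap
    ∘ₗ (TensorProduct.mk k (H ⊗[k] H) B Rinv)

section Aux

variable (k H : Type*) [Field k] [Semiring H] [Bialgebra k H]

/-- `x ⊗ y ↦ x ⊗ (y ⊗ 1)` as an algebra hom. -/
def qtJ : H ⊗[k] H →ₐ[k] H ⊗[k] (H ⊗[k] H) :=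
  Algebra.TensorProduct.map (AlgHom.id k H) Algebra.TensorProduct.includeLeft

/-- `x ⊗ y ↦ x ⊗ (1 ⊗ y)` as an algebra hom. -/
def qtJ' : H ⊗[k] H →ₐ[k] H ⊗[k] (H ⊗[k] H) :=
  Algebra.TensorProduct.map (AlgHom.id k H) Algebra.TensorProduct.includeRight

/-- `id ⊗ Δ` as an algebra hom. -/
def qtD : H ⊗[k] H →ₐ[k] H ⊗[k] (H ⊗[k] H) :=
  Algebra.TensorProduct.map (AlgHom.id k H) (Bialgebra.comulAlgHom k H)

/-- `id ⊗ ε` (composed with the right unitor) as an algebra hom. -/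
def qtE : H ⊗[k] H →ₐ[k] H :=
  (Algebra.TensorProduct.rid k k H).toAlgHom.comp
    (Algebra.TensorProduct.map (AlgHom.id k H) (Bialgebra.counitAlgHom k H))

/-- `ε ⊗ id` (composed with the left unitor) as an algebra hom. -/
def qtG : H ⊗[k] H →ₐ[k] H :=
  (Algebra.TensorProduct.lid k H).toAlgHom.comp
    (Algebra.TensorProduct.map (Bialgebra.counitAlgHom k H) (AlgHom.id k H))

/-- `id ⊗ ε ⊗ ε` as an algebra hom. -/
def qtF3 : H ⊗[k] (H ⊗[k] H) →ₐ[k] H :=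
  (qtE k H).comp (Algebra.TensorProduct.map (AlgHom.id k H) (qtG k H))

@[simp] lemma qtJ_tmul (x y : H) : qtJ k H (x ⊗ₜ[k] y) = x ⊗ₜ[k] (y ⊗ₜ[k] 1) := rfl

@[simp] lemma qtJ'_tmul (x y : H) : qtJ' k H (x ⊗ₜ[k] y) = x ⊗ₜ[k] ((1 : H) ⊗ₜ[k] y) := rfl

@[simp] lemma qtD_tmul (x y : H) :
    qtD k H (x ⊗ₜ[k] y) = x ⊗ₜ[k] (Coalgebra.comul (R := k) y) := rfl

@[simp] lemma qtE_tmul (x y : H) :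
    qtE k H (x ⊗ₜ[k] y) = Coalgebra.counit (R := k) y • x := by
  simp [qtE]

@[simp] lemma qtG_tmul (x y : H) :
    qtG k H (x ⊗ₜ[k] y) = Coalgebra.counit (R := k) x • y := by
  simp [qtG]

lemma qtG_comul (h : H) : qtG k H (Coalgebra.comul (R := k) h) = h := by
  have h1 : ∀ z : H ⊗[k] H,
      qtG k H z = TensorProduct.lid k H ((Coalgebra.counit (R := k)).rTensor H z) := by
    intro z
    induction z using TensorProduct.induction_on with
    | zero => simp
    | tmul x y => simp [TensorProduct.smul_tmul]
    | add x y hx hy => simp [hx, hy]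
  rw [h1, Coalgebra.rTensor_counit_comul]
  simp

lemma qtF3_qtJ (z : H ⊗[k] H) : qtF3 k H (qtJ k H z) = qtE k H z := by
  induction z using TensorProduct.induction_on with
  | zero => simp
  | tmul x y => simp [qtF3, qtJ, qtE]
  | add x y hx hy => simp [hx, hy]

lemma qtF3_qtJ' (z : H ⊗[k] H) : qtF3 k H (qtJ' k H z) = qtE k H z := by
  induction z using TensorProduct.induction_on with
  | zero => simp
  | tmul x y => simp [qtF3, qtJ', qtE]
  | add x y hx hy => simp [hx, hy]

lemma qtF3_qtD (z : H ⊗[k] H) : qtF3 k H (qtD k H z) = qtE k H z := by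
  induction z using TensorProduct.induction_on with
  | zero => simp
  | tmul x y => simp [qtF3, qtD, qtE, qtG_comul]
  | add x y hx hy => simp [hx, hy]

end Aux

set_option maxHeartbeats 1600000 in
set_option synthInstance.maxHeartbeats 400000 in
/-- for a quasitriangular bialgebra `(H, R)` and a left `H`-module
algebra `B`, the coaction `ρ(b) = R⁻¹(1 ⊗ b)` makes `B` a left `H`-comodule
algebra: `ρ(ab) = Σ a₍₋₁₎b₍₋₁₎ ⊗ a₍₀₎b₍₀₎` and `ρ(1) = 1 ⊗ 1`. -/
theorem qt_coaction_comodule_algebra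
    (k H B : Type*) [Field k] [Semiring H] [Bialgebra k H]
    [Ring B] [Algebra k B]
    (α : H →ₗ[k] B →ₗ[k] B)
    -- `B` is a left `H`-module algebra
    (hα_one : ∀ b : B, α 1 b = b)
    (hα_mul : ∀ (g h : H) (b : B), α (g * h) b = α g (α h b))
    (hma : ∀ (h : H) (a b : B),
      α h (a * b) =
        LinearMap.mul' k B (TensorProduct.map (α.flip a) (α.flip b) (Coalgebra.comul h)))
    (hma1 : ∀ h : H, α h (1 : B) = Coalgebra.counit (R := k) h • (1 : B))
    (R Rinv : H ⊗[k] H)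
    -- `R` is invertible
    (hR_inv : R * Rinv = 1 ∧ Rinv * R = 1)
    -- `Δᶜᵒᵖ(h) R = R Δ(h)`
    (hQT1 : ∀ h : H,
      (TensorProduct.comm k H H) (Coalgebra.comul h) * R = R * Coalgebra.comul h)
    -- `(Δ ⊗ id)(R) = R₁₃ R₂₃`
    (hQT2 : (TensorProduct.map Coalgebra.comul LinearMap.id) R
      = (TensorProduct.map ((TensorProduct.mk k H H).flip 1) LinearMap.id) R
        * (TensorProduct.map (TensorProduct.mk k H H 1) LinearMap.id) R)
    -- `(id ⊗ Δ)(R) = R₁₃ R₁₂`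
    (hQT3 : (TensorProduct.map LinearMap.id Coalgebra.comul) R
      = (TensorProduct.map LinearMap.id (TensorProduct.mk k H H 1)) R
        * (TensorProduct.map LinearMap.id ((TensorProduct.mk k H H).flip 1)) R)
    :
    (∀ a b : B,
      qtCoaction k α Rinv (a * b)
        = (TensorProduct.map (LinearMap.mul' k H) (LinearMap.mul' k B))
            ((TensorProduct.tensorTensorTensorComm k H B H B)
              (qtCoaction k α Rinv a ⊗ₜ[k] qtCoaction k α Rinv b))) ∧
    qtCoaction k α Rinv (1 : B) = (1 : H) ⊗ₜ[k] (1 : B) := by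
  -- rewrite the linear-map versions of the slot maps in terms of the algebra homs
  have hDlin : ∀ z : H ⊗[k] H,
      (TensorProduct.map LinearMap.id (Coalgebra.comul (R := k))) z = qtD k H z := by
    intro z
    induction z using TensorProduct.induction_on with
    | zero => simp
    | tmul x y => simp
    | add x y hx hy => simp [hx, hy]
  have hJlin : ∀ z : H ⊗[k] H,
      (TensorProduct.map LinearMap.id ((TensorProduct.mk k H H).flip 1)) z = qtJ k H z := by
    intro z
    induction z using TensorProduct.induction_on with
    | zero => simp
    | tmul x y => simp
    | add x y hx hy => simp [hx, hy]
  have hJ'lin : ∀ z : H ⊗[k] H,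
      (TensorProduct.map LinearMap.id (TensorProduct.mk k H H 1)) z = qtJ' k H z := by
    intro z
    induction z using TensorProduct.induction_on with
    | zero => simp
    | tmul x y => simp
    | add x y hx hy => simp [hx, hy]
  -- `(id ⊗ Δ)(R) = R₁₃ R₁₂` in algebra-hom form
  have hQT3' : qtD k H R = qtJ' k H R * qtJ k H R := by
    rw [← hDlin, ← hJlin, ← hJ'lin]; exact hQT3
  have hX1 : qtD k H R * (qtJ k H Rinv * qtJ' k H Rinv) = 1 := by
    rw [hQT3', mul_assoc, ← mul_assoc (qtJ k H R), ← map_mul, hR_inv.1, map_one, one_mul,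
      ← map_mul, hR_inv.1, map_one]
  have hDinv : qtD k H Rinv * qtD k H R = 1 := by
    rw [← map_mul, hR_inv.2, map_one]
  -- key: `(id ⊗ Δ)(Rinv) = Rinv₁₂ Rinv₁₃`
  have key1 : qtD k H Rinv = qtJ k H Rinv * qtJ' k H Rinv := by
    calc qtD k H Rinv = qtD k H Rinv * (qtD k H R * (qtJ k H Rinv * qtJ' k H Rinv)) := by
          rw [hX1, mul_one]
      _ = (qtD k H Rinv * qtD k H R) * (qtJ k H Rinv * qtJ' k H Rinv) := by
          rw [mul_assoc]
      _ = qtJ k H Rinv * qtJ' k H Rinv := by rw [hDinv, one_mul]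
  -- counit facts: `(id ⊗ ε)(R) = 1` and `(id ⊗ ε)(Rinv) = 1`
  have huv : qtE k H R * qtE k H Rinv = 1 := by rw [← map_mul, hR_inv.1, map_one]
  have hvu : qtE k H Rinv * qtE k H R = 1 := by rw [← map_mul, hR_inv.2, map_one]
  have huu : qtE k H R = qtE k H R * qtE k H R := by
    have h := congrArg (qtF3 k H) hQT3'
    rwa [qtF3_qtD, map_mul, qtF3_qtJ, qtF3_qtJ'] at h
  have hu1 : qtE k H R = 1 := by
    calc qtE k H R = (qtE k H Rinv * qtE k H R) * qtE k H R := by rw [hvu, one_mul]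
      _ = qtE k H Rinv * (qtE k H R * qtE k H R) := by rw [mul_assoc]
      _ = qtE k H Rinv * qtE k H R := by rw [← huu]
      _ = 1 := hvu
  have hv1 : qtE k H Rinv = 1 := by
    have := hvu; rwa [hu1, mul_one] at this
  constructor
  · intro a b
    -- the bilinear map `y ⊗ z ↦ (α y a) * (α z b)`
    set β : H →ₗ[k] H →ₗ[k] B :=
      ((LinearMap.mul k B).comp (α.flip a)).compl₂ (α.flip b) with hβ
    set F : H ⊗[k] (H ⊗[k] H) →ₗ[k] H ⊗[k] B :=
      TensorProduct.map LinearMap.id (TensorProduct.lift β) with hF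
    have hliftβ : ∀ w : H ⊗[k] H,
        TensorProduct.lift β w
          = LinearMap.mul' k B (TensorProduct.map (α.flip a) (α.flip b) w) := by
      intro w
      induction w using TensorProduct.induction_on with
      | zero => simp
      | tmul p q => simp [hβ]
      | add x y hx hy => simp [hx, hy]
    have step1gen : ∀ z : H ⊗[k] H,
        (TensorProduct.map LinearMap.id (TensorProduct.lift α))
            ((TensorProduct.assoc k H H B) (z ⊗ₜ[k] (a * b)))
          = F ((TensorProduct.map LinearMap.id (Coalgebra.comul (R := k))) z) := by
      intro z
      induction z using TensorProduct.induction_on with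
      | zero => simp only [zero_tmul, LinearEquiv.map_zero, LinearMap.map_zero]
      | tmul x y => simp [hF, hma y a b, hliftβ]
      | add x y hx hy => simp only [add_tmul, LinearEquiv.map_add, LinearMap.map_add, hx, hy]
    have step1 : qtCoaction k α Rinv (a * b) = F (qtD k H Rinv) := by
      rw [← hDlin]
      exact step1gen Rinv
    have step3 : ∀ S T : H ⊗[k] H,
        F (qtJ k H S * qtJ' k H T)
          = (TensorProduct.map (LinearMap.mul' k H) (LinearMap.mul' k B))
              ((TensorProduct.tensorTensorTensorComm k H B H B)
                (((TensorProduct.map LinearMap.id (TensorProduct.lift α))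
                    ((TensorProduct.assoc k H H B) (S ⊗ₜ[k] a)))
                  ⊗ₜ[k]
                  ((TensorProduct.map LinearMap.id (TensorProduct.lift α))
                    ((TensorProduct.assoc k H H B) (T ⊗ₜ[k] b))))) := by
      intro S T
      induction S using TensorProduct.induction_on with
      | zero =>
        simp only [map_zero, zero_mul, zero_tmul, LinearEquiv.map_zero, LinearMap.map_zero]
      | tmul s₁ s₂ =>
        induction T using TensorProduct.induction_on with
        | zero =>
          simp only [map_zero, mul_zero, zero_tmul, tmul_zero, LinearEquiv.map_zero,
            LinearMap.map_zero]
        | tmul t₁ t₂ =>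
          simp only [hF, hβ, qtJ_tmul, qtJ'_tmul, Algebra.TensorProduct.tmul_mul_tmul,
            mul_one, one_mul, TensorProduct.assoc_tmul, TensorProduct.map_tmul,
            TensorProduct.lift.tmul, LinearMap.id_coe, id_eq,
            TensorProduct.tensorTensorTensorComm_tmul, LinearMap.mul'_apply,
            LinearMap.compl₂_apply, LinearMap.coe_comp, Function.comp_apply,
            LinearMap.flip_apply, LinearMap.mul_apply']
        | add x y hx hy =>
          simp only [LinearMap.map_add, LinearEquiv.map_add, map_add, mul_add, tmul_add,
            add_tmul, hx, hy]
      | add x y hx hy =>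
        simp only [LinearMap.map_add, LinearEquiv.map_add, map_add, add_mul, tmul_add,
          add_tmul, hx, hy]
    have hcoa : ∀ (c : B), qtCoaction k α Rinv c
        = (TensorProduct.map LinearMap.id (TensorProduct.lift α))
            ((TensorProduct.assoc k H H B) (Rinv ⊗ₜ[k] c)) := by
      intro c
      simp only [qtCoaction, LinearMap.coe_comp, Function.comp_apply, LinearEquiv.coe_coe,
        TensorProduct.mk_apply]
    rw [step1, key1, step3, hcoa a, hcoa b]
  · have hθ : ∀ z : H ⊗[k] H,
        (TensorProduct.map LinearMap.id (TensorProduct.lift α))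
            ((TensorProduct.assoc k H H B) (z ⊗ₜ[k] (1 : B)))
          = qtE k H z ⊗ₜ[k] (1 : B) := by
      intro z
      induction z using TensorProduct.induction_on with
      | zero => simp
      | tmul x y => simp [hma1 y, TensorProduct.smul_tmul, TensorProduct.tmul_smul]
      | add x y hx hy => simp only [add_tmul, map_add, hx, hy]
    simp only [qtCoaction, LinearMap.coe_comp, Function.comp_apply, LinearEquiv.coe_coe,
      TensorProduct.mk_apply]
    rw [hθ, hv1]
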